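/- arXiv:1610.09731 — 2 statements merged into one kernel-verified Lean document; each statement's English description precedes it below -/
import Mathlib

section
/- For every positive integer M and every x with 2e^{−γ} ≤ x < 2e^{h_M − γ}, K₀(x) ≤ −(ln(x/2) + γ) − Σ_{n=1}^{M} (1/(n!)²)(x²/4)ⁿ (ln(x/2) + γ − hₙ) + (I₀(x)/(2π)) · (e^{2M+2}(γ + ln(M+1))/(M+1)) · (x/(2(M+1)))^{2M+2}. -/
noncomputable section

/-- The `n`-th harmonic number `1 + 1/2 + ⋯ + 1/n` as a real number. -/
def harmonicNum (n : ℕ) : ℝ := ∑ i ∈ Finset.range n, (1 : ℝ) / (i + 1)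

/-- The modified Bessel function of the first kind of order zero, via its power series. -/
def besselI0 (x : ℝ) : ℝ := ∑' n : ℕ, (1 / ((n.factorial : ℝ))^2) * (x^2 / 4)^n

/-- The auxiliary series `Ψ(x) = Σ_{n≥1} hₙ/(n!)² (x²/4)ⁿ`. -/
def besselPsi (x : ℝ) : ℝ :=
  ∑' n : ℕ, (harmonicNum (n + 1) / (((n + 1).factorial : ℝ))^2) * (x^2 / 4)^(n + 1)

/-- The modified Bessel function of the second kind of order zero:
`K₀(x) = −(ln(x/2) + γ) I₀(x) + Ψ(x)`. -/
def besselK0 (x : ℝ) : ℝ :=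
  -(Real.log (x / 2) + Real.eulerMascheroniConstant) * besselI0 x + besselPsi x

namespace BesselAux
local notation "γ" => Real.eulerMascheroniConstant

lemma harmonicNum_eq (n : ℕ) : harmonicNum n = ((harmonic n : ℚ) : ℝ) := by
  unfold harmonicNum harmonic
  push_cast
  simp [one_div]

lemma harmonicNum_nonneg (n : ℕ) : 0 ≤ harmonicNum n := by
  unfold harmonicNum; positivity

lemma harmonicNum_succ (n : ℕ) : harmonicNum (n + 1) = harmonicNum n + 1 / (n + 1) := by
  simp [harmonicNum, Finset.sum_range_succ]

lemma harmonicNum_lt (n : ℕ) : harmonicNum n < γ + Real.log (n + 1) := by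
  have h := Real.eulerMascheroniSeq_lt_eulerMascheroniConstant n
  have h2 : Real.eulerMascheroniSeq n = (harmonic n : ℝ) - Real.log (n + 1) := rfl
  rw [harmonicNum_eq]
  rw [h2] at h
  linarith

lemma gamma_gt : (1:ℝ)/2 < γ := Real.one_half_lt_eulerMascheroniConstant
lemma gamma_lt : γ < 2/3 := Real.eulerMascheroniConstant_lt_two_thirds

lemma exp_43_lt : Real.exp (2 * (2/3) : ℝ) < 3.7938 := by
  have h1 : Real.exp (2 * (2/3) : ℝ) ^ (3:ℕ) = Real.exp 1 ^ (4:ℕ) := by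
    rw [← Real.exp_nat_mul, ← Real.exp_nat_mul]; norm_num
  have h2 : Real.exp 1 ^ (4:ℕ) < 3.7938 ^ (3:ℕ) := by
    have h := Real.exp_one_lt_d9
    have h0 : (0:ℝ) < Real.exp 1 := Real.exp_pos 1
    calc Real.exp 1 ^ (4:ℕ) < 2.7182818286 ^ (4:ℕ) := by
          exact pow_lt_pow_left₀ h h0.le (by norm_num)
      _ < 3.7938 ^ (3:ℕ) := by norm_num
  refine lt_of_pow_lt_pow_left₀ 3 (by norm_num) ?_
  rw [h1]; exact h2

lemma exp_neg_two_gamma_ge : (0.263 : ℝ) ≤ Real.exp (-(2 * γ)) := by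
  have h1 : Real.exp (2 * γ) < 3.7938 := by
    refine lt_of_le_of_lt ?_ exp_43_lt
    exact Real.exp_le_exp.2 (by nlinarith [gamma_lt])
  have h2 : 0 < Real.exp (2 * γ) := Real.exp_pos _
  rw [Real.exp_neg, le_inv_comm₀ (by norm_num) h2]
  nlinarith
lemma exp_neg_two_gamma_le : Real.exp (-(2 * γ)) ≤ 1 :=
  Real.exp_le_one_iff.2 (by nlinarith [gamma_gt])

lemma one_le_gamma_add_log (M : ℕ) (hM : 1 ≤ M) : 1 ≤ γ + Real.log (M + 1) := by
  have h2 : Real.log 2 ≤ Real.log (M + 1) := by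
    apply Real.log_le_log (by norm_num)
    have : (1:ℝ) ≤ M := by exact_mod_cast hM
    linarith
  have := Real.log_two_gt_d9
  have := gamma_gt
  linarith

lemma log3_ge : (1.0397 : ℝ) ≤ Real.log 3 := by
  have h : (3:ℝ) * Real.log 2 ≤ 2 * Real.log 3 := by
    have : Real.log (2^(3:ℕ) : ℝ) ≤ Real.log (3^(2:ℕ) : ℝ) :=
      Real.log_le_log (by norm_num) (by norm_num)
    rw [Real.log_pow, Real.log_pow] at this
    push_cast at this
    linarith
  have := Real.log_two_gt_d9
  linarith

end BesselAux

namespace BesselAux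
local notation "γ" => Real.eulerMascheroniConstant

/-- `Efac M = e^(2M+2) / (2π (M+1)^(2M+3))`. -/
def Efac (M : ℕ) : ℝ := Real.exp 1 ^ (2*M+2) / (2 * Real.pi * ((M:ℝ)+1)^(2*M+3))

lemma sqrtpi_le_stirling (n : ℕ) : Real.sqrt Real.pi ≤ Stirling.stirlingSeq (n + 1) := by
  have h : Filter.Tendsto (Stirling.stirlingSeq ∘ Nat.succ) Filter.atTop
      (nhds (Real.sqrt Real.pi)) :=
    Stirling.tendsto_stirlingSeq_sqrt_pi.comp (Filter.tendsto_add_atTop_nat 1)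
  exact Stirling.stirlingSeq'_antitone.le_of_tendsto h n

lemma factorial_sq_ge (n : ℕ) :
    2 * Real.pi * ((n:ℝ)+1) * (((n:ℝ)+1)/Real.exp 1)^(2*n+2) ≤ ((n+1).factorial : ℝ)^2 := by
  have h := sqrtpi_le_stirling n
  rw [Stirling.stirlingSeq] at h
  set c : ℝ := ((n:ℝ)+1)/Real.exp 1 with hc
  have hc0 : 0 < c := by positivity
  have hd : 0 < Real.sqrt (2 * ((n:ℕ)+1 : ℝ)) * c ^ (n+1) := by positivity
  have hcast : ((n+1 : ℕ) : ℝ) = (n:ℝ)+1 := by push_cast; ring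
  rw [hcast] at h
  have h2 : Real.sqrt Real.pi * (Real.sqrt (2*((n:ℝ)+1)) * c ^ (n+1)) ≤ ((n+1).factorial : ℝ) := by
    rw [← le_div_iff₀ (by positivity)]
    exact h
  have h3 : (Real.sqrt Real.pi * (Real.sqrt (2*((n:ℝ)+1)) * c ^ (n+1)))^2
      ≤ ((n+1).factorial : ℝ)^2 := by
    apply pow_le_pow_left₀ (by positivity) h2
  calc 2 * Real.pi * ((n:ℝ)+1) * c^(2*n+2)
      = (Real.sqrt Real.pi)^2 * ((Real.sqrt (2*((n:ℝ)+1)))^2 * (c^(n+1))^2) := by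
        rw [Real.sq_sqrt Real.pi_pos.le, Real.sq_sqrt (by positivity), ← pow_mul]
        ring_nf
    _ = (Real.sqrt Real.pi * (Real.sqrt (2*((n:ℝ)+1)) * c ^ (n+1)))^2 := by ring
    _ ≤ _ := h3

lemma core_stirling (M : ℕ) :
    2 * Real.pi * ((M:ℝ)+1)^(2*M+3) ≤ Real.exp 1 ^ (2*M+2) * ((M+1).factorial : ℝ)^2 := by
  have h := factorial_sq_ge M
  have he : (0:ℝ) < Real.exp 1 ^ (2*M+2) := by positivity
  have hdiv : (((M:ℝ)+1)/Real.exp 1)^(2*M+2) = ((M:ℝ)+1)^(2*M+2) / Real.exp 1 ^ (2*M+2) :=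
    div_pow _ _ _
  rw [hdiv] at h
  have h2 : 2 * Real.pi * ((M:ℝ)+1)^(2*M+3)
      = 2 * Real.pi * ((M:ℝ)+1) * ((M:ℝ)+1)^(2*M+2) := by ring
  rw [h2]
  have h3 := mul_le_mul_of_nonneg_right h he.le
  have he' : Real.exp 1 ^ (2*M+2) ≠ 0 := ne_of_gt he
  calc 2 * Real.pi * ((M:ℝ)+1) * ((M:ℝ)+1)^(2*M+2)
      = (2 * Real.pi * ((M:ℝ)+1) * (((M:ℝ)+1)^(2*M+2) / Real.exp 1 ^ (2*M+2)))
          * Real.exp 1 ^ (2*M+2) := by field_simp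
    _ ≤ ((M+1).factorial : ℝ)^2 * Real.exp 1 ^ (2*M+2) := h3
    _ = Real.exp 1 ^ (2*M+2) * ((M+1).factorial : ℝ)^2 := by ring

lemma efac_pos (M : ℕ) : 0 < Efac M := by
  unfold Efac
  positivity

lemma stirling_le_efac (M : ℕ) : 1 / ((M+1).factorial : ℝ)^2 ≤ Efac M := by
  have h := core_stirling M
  have hf : (0:ℝ) < ((M+1).factorial : ℝ)^2 := by positivity
  rw [Efac, div_le_div_iff₀ hf (by positivity)]
  linarith [core_stirling M]

lemma one_le_sigma (M : ℕ) : 1 ≤ Efac M * ((M+1).factorial : ℝ)^2 := by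
  have h := stirling_le_efac M
  have hf : (0:ℝ) < ((M+1).factorial : ℝ)^2 := by positivity
  calc (1:ℝ) = (1 / ((M+1).factorial : ℝ)^2) * ((M+1).factorial : ℝ)^2 := by
        field_simp
    _ ≤ Efac M * ((M+1).factorial : ℝ)^2 := by
        apply mul_le_mul_of_nonneg_right h hf.le

lemma sigma_one : (1.086 : ℝ) ≤ Efac 1 * ((2).factorial : ℝ)^2 := by
  have h1 : Efac 1 * ((2).factorial : ℝ)^2 = Real.exp 1 ^ 4 / (16 * Real.pi) := by
    unfold Efac
    norm_num [Nat.factorial]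
    field_simp
    ring
  rw [h1]
  have he := Real.exp_one_gt_d9
  have hp := Real.pi_lt_d6
  have hp0 := Real.pi_gt_d6
  rw [le_div_iff₀ (by positivity)]
  calc (1.086:ℝ) * (16 * Real.pi) ≤ 1.086 * (16 * 3.141593) := by nlinarith
    _ ≤ 2.7182818283 ^ 4 := by norm_num
    _ ≤ Real.exp 1 ^ 4 := by
        apply pow_le_pow_left₀ (by norm_num) he.le

end BesselAux

namespace BesselAux
local notation "γ" => Real.eulerMascheroniConstant

lemma key01 (M : ℕ) (hM : 1 ≤ M) :
    harmonicNum (M+1) ≤ (Efac M * (((M+1).factorial : ℝ))^2) * (γ + Real.log ((M:ℝ)+1))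
      + Real.exp (-(2*γ)) * ((γ + Real.log ((M:ℝ)+1)) - (γ + Real.log ((M:ℝ)+3)) / ((M:ℝ)+2)^2) := by
  have hw : (0.263:ℝ) ≤ Real.exp (-(2*γ)) := exp_neg_two_gamma_ge
  have hw1 : Real.exp (-(2*γ)) ≤ 1 := exp_neg_two_gamma_le
  have hw0 : (0:ℝ) < Real.exp (-(2*γ)) := Real.exp_pos _
  have hγ1 := gamma_gt
  have hγ2 := gamma_lt
  rcases Nat.lt_or_ge M 2 with h2 | h2
  · -- M = 1
    have hM1 : M = 1 := by omega
    subst hM1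
    have hh2 : harmonicNum 2 = 3/2 := by
      rw [harmonicNum_succ, harmonicNum_succ]
      norm_num [harmonicNum]
    have hσ := sigma_one
    have hl2a := Real.log_two_gt_d9
    have hl2b := Real.log_two_lt_d9
    have hlog4 : Real.log ((1:ℕ):ℝ)+3 = 0 + 3 := by norm_num
    have hl4 : Real.log (((1:ℕ):ℝ)+3) = 2 * Real.log 2 := by
      norm_num
      rw [show (4:ℝ) = 2^(2:ℕ) by norm_num, Real.log_pow]
      push_cast; ring
    have hl1 : Real.log (((1:ℕ):ℝ)+1) = Real.log 2 := by norm_num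
    rw [hh2, hl4, hl1]
    have hb : (0.9649:ℝ) ≤ (γ + Real.log 2) - (γ + 2*Real.log 2)/(((1:ℕ):ℝ)+2)^2 := by
      have : (((1:ℕ):ℝ)+2)^2 = 9 := by norm_num
      rw [this]
      nlinarith
    have hσγ : (1.086:ℝ) * 1.1931 ≤ (Efac 1 * (((2).factorial : ℝ))^2) * (γ + Real.log 2) := by
      apply mul_le_mul hσ (by nlinarith) (by norm_num) (le_trans (by norm_num) hσ)
    have hwb : (0.263:ℝ) * 0.9649
        ≤ Real.exp (-(2*γ)) * ((γ + Real.log 2) - (γ + 2*Real.log 2)/(((1:ℕ):ℝ)+2)^2) := by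
      apply mul_le_mul hw hb (by norm_num) hw0.le
    norm_num at hσγ hwb ⊢
    nlinarith
  · -- M ≥ 2
    have hm : (2:ℝ) ≤ (M:ℝ) := by exact_mod_cast h2
    set m : ℝ := (M:ℝ) with hmdef
    have hm1 : (0:ℝ) < m + 1 := by linarith
    have hm3 : (3:ℝ) ≤ m + 1 := by linarith
    have h16 : (16:ℝ) ≤ (m+2)^2 := by nlinarith
    have hγl : (1.5397:ℝ) ≤ γ + Real.log (m+1) := by
      have h3 : Real.log 3 ≤ Real.log (m+1) := Real.log_le_log (by norm_num) hm3
      have := log3_ge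
      linarith
    have hγl0 : (0:ℝ) ≤ γ + Real.log (m+1) := by linarith
    have hF1 : harmonicNum (M+1) < (γ + Real.log (m+1)) + 1/(m+1) := by
      have := harmonicNum_lt M
      rw [harmonicNum_succ]
      push_cast
      linarith
    have hF4 : Real.log (m+3) ≤ Real.log (m+1) + 2/(m+1) := by
      have hpos : (0:ℝ) < (m+3)/(m+1) := by positivity
      have h := Real.log_le_sub_one_of_pos hpos
      rw [Real.log_div (by linarith) (by linarith)] at h
      have : (m+3)/(m+1) - 1 = 2/(m+1) := by field_simp; ring
      linarith [this ▸ h]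
    set u : ℝ := (γ + Real.log (m+3)) / (m+2)^2 with hu_def
    have hu_nonneg : 0 ≤ u := by
      have : (0:ℝ) ≤ Real.log (m+3) := Real.log_nonneg (by linarith)
      positivity
    have hu : u ≤ (γ + Real.log (m+1))/16 + 1/(8*(m+1)) := by
      have hnum : γ + Real.log (m+3) ≤ (γ + Real.log (m+1)) + 2/(m+1) := by linarith
      have step1 : u ≤ ((γ + Real.log (m+1)) + 2/(m+1)) / (m+2)^2 := by
        rw [hu_def]
        gcongr
      have step2 : ((γ + Real.log (m+1)) + 2/(m+1)) / (m+2)^2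
          ≤ ((γ + Real.log (m+1)) + 2/(m+1)) / 16 := by
        apply div_le_div_of_nonneg_left (by positivity) (by norm_num) h16
      have step3 : ((γ + Real.log (m+1)) + 2/(m+1)) / 16
          = (γ + Real.log (m+1))/16 + 1/(8*(m+1)) := by
        field_simp
        ring
      linarith
    have hbrack : (15/16)*(γ + Real.log (m+1)) - 1/(8*(m+1)) ≤ (γ + Real.log (m+1)) - u := by
      linarith
    have hbrack0 : (0:ℝ) ≤ (15/16)*(γ + Real.log (m+1)) - 1/(8*(m+1)) := by
      have h8 : 1/(8*(m+1)) ≤ 1/24 := by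
        apply div_le_div_of_nonneg_left (by norm_num) (by norm_num) (by linarith)
      linarith
    have hkey : 1/(m+1) ≤ Real.exp (-(2*γ)) * ((γ + Real.log (m+1)) - u) := by
      have h3 : Real.exp (-(2*γ)) * ((15/16)*(γ + Real.log (m+1)) - 1/(8*(m+1)))
          ≤ Real.exp (-(2*γ)) * ((γ + Real.log (m+1)) - u) :=
        mul_le_mul_of_nonneg_left hbrack hw0.le
      have h4 : (0.263:ℝ) * ((15/16)*(γ + Real.log (m+1)) - 1/(8*(m+1)))
          ≤ Real.exp (-(2*γ)) * ((15/16)*(γ + Real.log (m+1)) - 1/(8*(m+1))) :=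
        mul_le_mul_of_nonneg_right hw hbrack0
      have h5 : 1/(m+1) ≤ (0.263:ℝ) * ((15/16)*(γ + Real.log (m+1)) - 1/(8*(m+1))) := by
        rw [div_le_iff₀ hm1]
        have e1 : ((0.263:ℝ) * ((15/16)*(γ + Real.log (m+1)) - 1/(8*(m+1)))) * (m+1)
            = 0.2465625*((γ + Real.log (m+1))*(m+1)) - 0.263/8 := by
          field_simp
          ring
        rw [e1]
        have h6 : (1.5397:ℝ)*3 ≤ (γ + Real.log (m+1))*(m+1) :=
          mul_le_mul hγl hm3 (by norm_num) hγl0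
        linarith
      linarith
    have hσγ : (γ + Real.log (m+1)) ≤ (Efac M * (((M+1).factorial : ℝ))^2) * (γ + Real.log (m+1)) :=
      le_mul_of_one_le_left hγl0 (one_le_sigma M)
    linarith

end BesselAux

namespace BesselAux
local notation "γ" => Real.eulerMascheroniConstant

lemma choose_ge_M (M m : ℕ) (hm : 1 ≤ m) : (M:ℝ)+2 ≤ (((m+M+1).choose (M+1) : ℕ) : ℝ) := by
  have h : M+2 ≤ (m+M+1).choose (M+1) := by
    calc M+2 = (M+1+1).choose (M+1) := (Nat.choose_succ_self_right (M+1)).symm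
      _ ≤ (m+M+1).choose (M+1) := Nat.choose_le_choose _ (by omega)
  exact_mod_cast h

lemma choose_ge_m (M m : ℕ) (hM : 1 ≤ M) (hm : 1 ≤ m) :
    (m:ℝ)+2 ≤ (((m+M+1).choose (M+1) : ℕ) : ℝ) := by
  have hsymm : (m+M+1).choose (M+1) = (m+M+1).choose m := by
    have h := Nat.choose_symm (show M+1 ≤ m+M+1 by omega)
    rw [show m+M+1 - (M+1) = m from by omega] at h
    exact h.symm
  have h1 : (m+2).choose m ≤ (m+M+1).choose m := Nat.choose_le_choose _ (by omega)
  have h2 : (m+2).choose m = (m+2).choose 2 := by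
    have h := Nat.choose_symm (show 2 ≤ m+2 by omega)
    rw [show m+2-2 = m from by omega] at h
    exact h
  have h3 : m+2 ≤ (m+2).choose 2 := by
    rw [Nat.choose_two_right]
    rw [show m+2-1 = m+1 from by omega]
    rw [Nat.le_div_iff_mul_le (by norm_num)]
    exact Nat.mul_le_mul_left _ (by omega)
  have : m+2 ≤ (m+M+1).choose (M+1) := by
    rw [hsymm]
    omega
  exact_mod_cast this

lemma key_term (M m : ℕ) (hM : 1 ≤ M) (hm : 1 ≤ m) (q L : ℝ) (hq : 0 ≤ q) (hL : 0 ≤ L) :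
    (harmonicNum (m+M+1) - L) * (1/(((m+M+1).factorial:ℝ))^2 * q^(m+M+1))
      ≤ (1/((m.factorial:ℝ))^2 * q^m) * ((γ + Real.log ((M:ℝ)+1)) * q^(M+1) * Efac M) := by
  have hmr : (1:ℝ) ≤ (m:ℝ) := by exact_mod_cast hm
  have hMr : (1:ℝ) ≤ (M:ℝ) := by exact_mod_cast hM
  have ha0 : (0:ℝ) ≤ 1/(((m+M+1).factorial:ℝ))^2 * q^(m+M+1) := by positivity
  have hh : harmonicNum (m+M+1) - L ≤ γ + Real.log ((m:ℝ)+(M:ℝ)+2) := by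
    have h := harmonicNum_lt (m+M+1)
    push_cast at h
    rw [show ((m:ℝ)+(M:ℝ)+1+1 : ℝ) = (m:ℝ)+(M:ℝ)+2 by ring] at h
    linarith
  have step1 : (harmonicNum (m+M+1) - L) * (1/(((m+M+1).factorial:ℝ))^2 * q^(m+M+1))
      ≤ (γ + Real.log ((m:ℝ)+(M:ℝ)+2)) * (1/(((m+M+1).factorial:ℝ))^2 * q^(m+M+1)) :=
    mul_le_mul_of_nonneg_right hh ha0
  refine step1.trans ?_
  have hfact : ((m+M+1).factorial : ℝ)
      = (((m+M+1).choose (M+1) : ℕ) : ℝ) * (m.factorial:ℝ) * (((M+1).factorial:ℝ)) := by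
    have h := Nat.add_choose_mul_factorial_mul_factorial m (M+1)
    rw [show m+(M+1) = m+M+1 from by omega] at h
    exact_mod_cast h.symm
  set c : ℝ := (((m+M+1).choose (M+1) : ℕ) : ℝ) with hc_def
  have hc1 : (M:ℝ)+2 ≤ c := choose_ge_M M m hm
  have hc2 : (m:ℝ)+2 ≤ c := choose_ge_m M m hM hm
  have hc0 : (0:ℝ) < c := by linarith
  have hF1 : (0:ℝ) < (m.factorial:ℝ) := by exact_mod_cast m.factorial_pos
  have hF2 : (0:ℝ) < ((M+1).factorial:ℝ) := by exact_mod_cast (M+1).factorial_pos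
  have hgl1 : 1 ≤ γ + Real.log ((M:ℝ)+1) := one_le_gamma_add_log M hM
  have hlog0 : (0:ℝ) ≤ γ + Real.log ((m:ℝ)+(M:ℝ)+2) := by
    have h0 : (0:ℝ) ≤ Real.log ((m:ℝ)+(M:ℝ)+2) := Real.log_nonneg (by linarith)
    linarith [gamma_gt]
  have hF3 : γ + Real.log ((m:ℝ)+(M:ℝ)+2) ≤ c^2 * (γ + Real.log ((M:ℝ)+1)) := by
    have l1 : Real.log ((m:ℝ)+(M:ℝ)+2) ≤ (m:ℝ)+(M:ℝ)+1 := by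
      have h := Real.log_le_sub_one_of_pos (show (0:ℝ) < (m:ℝ)+(M:ℝ)+2 by positivity)
      linarith
    have l2 : ((m:ℝ)+2)*((M:ℝ)+2) ≤ c^2 := by nlinarith
    have l3 : γ + Real.log ((m:ℝ)+(M:ℝ)+2) ≤ c^2 := by nlinarith [gamma_lt]
    nlinarith [sq_nonneg c]
  have hst : 1/(((M+1).factorial:ℝ))^2 ≤ Efac M := stirling_le_efac M
  have e1 : (γ + Real.log ((m:ℝ)+(M:ℝ)+2)) * (1/(((m+M+1).factorial:ℝ))^2 * q^(m+M+1))
      = ((γ + Real.log ((m:ℝ)+(M:ℝ)+2))/c^2)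
        * ((1/((m.factorial:ℝ))^2 * q^m) * (q^(M+1) * (1/(((M+1).factorial:ℝ))^2))) := by
    rw [hfact, show m+M+1 = m+(M+1) from by omega, pow_add]
    ring
  rw [e1]
  have hx1 : (γ + Real.log ((m:ℝ)+(M:ℝ)+2))/c^2 ≤ γ + Real.log ((M:ℝ)+1) := by
    rw [div_le_iff₀ (by positivity)]
    linarith [hF3]
  have hx1' : (0:ℝ) ≤ (γ + Real.log ((m:ℝ)+(M:ℝ)+2))/c^2 := by positivity
  have hz : q^(M+1) * (1/(((M+1).factorial:ℝ))^2) ≤ q^(M+1) * Efac M :=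
    mul_le_mul_of_nonneg_left hst (by positivity)
  have hy0 : (0:ℝ) ≤ 1/((m.factorial:ℝ))^2 * q^m := by positivity
  calc ((γ + Real.log ((m:ℝ)+(M:ℝ)+2))/c^2)
        * ((1/((m.factorial:ℝ))^2 * q^m) * (q^(M+1) * (1/(((M+1).factorial:ℝ))^2)))
      ≤ (γ + Real.log ((M:ℝ)+1))
        * ((1/((m.factorial:ℝ))^2 * q^m) * (q^(M+1) * Efac M)) := by
        refine mul_le_mul hx1 (mul_le_mul_of_nonneg_left hz hy0) ?_ (by linarith)
        positivity
    _ = (1/((m.factorial:ℝ))^2 * q^m) * ((γ + Real.log ((M:ℝ)+1)) * q^(M+1) * Efac M) := by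
        ring

end BesselAux

namespace BesselAux
local notation "γ" => Real.eulerMascheroniConstant

lemma key_t01 (M : ℕ) (hM : 1 ≤ M) (q L : ℝ) (hq : Real.exp (-(2*γ)) ≤ q) (hL : 0 ≤ L) :
    (harmonicNum (M+1) - L) * (1/(((M+1).factorial:ℝ))^2 * q^(M+1))
      + (harmonicNum (M+2) - L) * (1/(((M+2).factorial:ℝ))^2 * q^(M+2))
      ≤ (1 + q) * ((γ + Real.log ((M:ℝ)+1)) * q^(M+1) * Efac M) := by
  have hw0 : (0:ℝ) < Real.exp (-(2*γ)) := Real.exp_pos _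
  have hq0 : (0:ℝ) ≤ q := le_trans hw0.le hq
  have hMr : (1:ℝ) ≤ (M:ℝ) := by exact_mod_cast hM
  have hF2 : (0:ℝ) < ((M+1).factorial:ℝ) := by exact_mod_cast (M+1).factorial_pos
  set B : ℝ := 1/(((M+1).factorial:ℝ))^2 * q^(M+1) with hB_def
  have hB0 : (0:ℝ) ≤ B := by positivity
  set γl : ℝ := γ + Real.log ((M:ℝ)+1) with hγl_def
  have hγl1 : 1 ≤ γl := one_le_gamma_add_log M hM
  have hγl0 : 0 ≤ γl := by linarith
  set σ : ℝ := Efac M * (((M+1).factorial:ℝ))^2 with hσ_def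
  have hσ1 : 1 ≤ σ := one_le_sigma M
  set u : ℝ := (γ + Real.log ((M:ℝ)+3)) / ((M:ℝ)+2)^2 with hu_def
  have hlog3 : (0:ℝ) ≤ Real.log ((M:ℝ)+3) := Real.log_nonneg (by linarith)
  have hu0 : 0 ≤ u := by
    rw [hu_def]
    have := gamma_gt
    positivity
  have hbr0 : 0 ≤ γl - u := by
    have l1 : Real.log ((M:ℝ)+3) ≤ (M:ℝ)+2 := by
      have h := Real.log_le_sub_one_of_pos (show (0:ℝ) < (M:ℝ)+3 by positivity)
      linarith
    have l2 : γ + Real.log ((M:ℝ)+3) ≤ ((M:ℝ)+2)^2 * γl := by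
      nlinarith [gamma_lt, sq_nonneg ((M:ℝ)+2)]
    have l3 : u ≤ γl := by
      rw [hu_def, div_le_iff₀ (by positivity)]
      linarith
    linarith
  -- the two term bounds
  have hfact2 : ((M+2).factorial : ℝ) = ((M:ℝ)+2) * ((M+1).factorial:ℝ) := by
    have h : (M+2).factorial = (M+2) * (M+1).factorial := Nat.factorial_succ (M+1)
    push_cast [h]
    ring
  have e2 : 1/(((M+2).factorial:ℝ))^2 * q^(M+2) = q/((M:ℝ)+2)^2 * B := by
    rw [hfact2, hB_def, pow_succ]
    have hM2 : ((M:ℝ)+2) ≠ 0 := by positivity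
    field_simp
    ring
  have b1 : (harmonicNum (M+1) - L) * B ≤ (σ*γl + Real.exp (-(2*γ)) * (γl - u)) * B := by
    apply mul_le_mul_of_nonneg_right ?_ hB0
    have h := key01 M hM
    rw [← hγl_def, ← hσ_def, ← hu_def] at h
    linarith
  have b2 : (harmonicNum (M+2) - L) * (1/(((M+2).factorial:ℝ))^2 * q^(M+2)) ≤ (q*u) * B := by
    rw [e2]
    have hh2 : harmonicNum (M+2) - L ≤ γ + Real.log ((M:ℝ)+3) := by
      have h := harmonicNum_lt (M+2)
      push_cast at h
      rw [show ((M:ℝ)+2+1 : ℝ) = (M:ℝ)+3 by ring] at h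
      linarith
    have hqB : (0:ℝ) ≤ q/((M:ℝ)+2)^2 * B := by positivity
    calc (harmonicNum (M+2) - L) * (q/((M:ℝ)+2)^2 * B)
        ≤ (γ + Real.log ((M:ℝ)+3)) * (q/((M:ℝ)+2)^2 * B) :=
          mul_le_mul_of_nonneg_right hh2 hqB
      _ = (q*u) * B := by rw [hu_def]; ring
  -- combine
  have s1 : Real.exp (-(2*γ)) * (γl - u) ≤ q * (γl - u) :=
    mul_le_mul_of_nonneg_right hq hbr0
  have s4 : q*γl ≤ q*(σ*γl) :=
    mul_le_mul_of_nonneg_left (le_mul_of_one_le_left hγl0 hσ1) hq0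
  have stot : σ*γl + Real.exp (-(2*γ)) * (γl - u) + q*u ≤ σ*γl + q*(σ*γl) := by
    have : q * (γl - u) + q*u = q*γl := by ring
    linarith
  have eRHS : (1 + q) * (γl * q^(M+1) * Efac M) = (σ*γl + q*(σ*γl)) * B := by
    rw [hσ_def, hB_def]
    field_simp
  rw [eRHS]
  have final : ((σ*γl + Real.exp (-(2*γ)) * (γl - u)) + q*u) * B ≤ (σ*γl + q*(σ*γl)) * B :=
    mul_le_mul_of_nonneg_right (by linarith) hB0
  calc (harmonicNum (M+1) - L) * B
        + (harmonicNum (M+2) - L) * (1/(((M+2).factorial:ℝ))^2 * q^(M+2))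
      ≤ (σ*γl + Real.exp (-(2*γ)) * (γl - u)) * B + (q*u) * B := add_le_add b1 b2
    _ = ((σ*γl + Real.exp (-(2*γ)) * (γl - u)) + q*u) * B := by ring
    _ ≤ (σ*γl + q*(σ*γl)) * B := final

end BesselAux

namespace BesselAux
local notation "γ" => Real.eulerMascheroniConstant

lemma fact_term_le (q : ℝ) (hq : 0 ≤ q) (n : ℕ) :
    1/((n.factorial:ℝ))^2 * q^n ≤ q^n / (n.factorial:ℝ) := by
  have h1 : (1:ℝ) ≤ (n.factorial:ℝ) := by exact_mod_cast n.factorial_pos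
  have h2 : (n.factorial:ℝ) ≤ ((n.factorial:ℝ))^2 := by nlinarith
  calc 1/((n.factorial:ℝ))^2 * q^n = q^n/((n.factorial:ℝ))^2 := by ring
    _ ≤ q^n/(n.factorial:ℝ) := div_le_div_of_nonneg_left (by positivity) (by linarith) h2

lemma summable_a (q : ℝ) (hq : 0 ≤ q) :
    Summable (fun n : ℕ => 1/((n.factorial:ℝ))^2 * q^n) := by
  exact Summable.of_nonneg_of_le (fun n => by positivity) (fact_term_le q hq)
    (Real.summable_pow_div_factorial q)

lemma summable_wa (q : ℝ) (hq : 0 ≤ q) :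
    Summable (fun n : ℕ => (γ + Real.log ((n:ℝ)+1)) * (1/((n.factorial:ℝ))^2 * q^n)) := by
  apply Summable.of_nonneg_of_le ?_ ?_ ((Real.summable_pow_div_factorial (2*q)).mul_left 2)
  · intro n
    have hcn : (0:ℝ) ≤ (n:ℝ) := Nat.cast_nonneg n
    have h0 : (0:ℝ) ≤ Real.log ((n:ℝ)+1) := Real.log_nonneg (by linarith)
    have := gamma_gt
    have h1 : (0:ℝ) ≤ 1/((n.factorial:ℝ))^2 * q^n := by positivity
    nlinarith
  · intro n
    have h1 : γ + Real.log ((n:ℝ)+1) ≤ 1 + n := by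
      have h := Real.log_le_sub_one_of_pos (show (0:ℝ) < (n:ℝ)+1 by positivity)
      have := gamma_lt
      linarith
    have h2 : (1:ℝ) + n ≤ 2 * 2^n := by
      have h3 : (n:ℕ) < 2^n := Nat.lt_two_pow_self
      have h4 : ((n:ℕ):ℝ) < ((2^n : ℕ):ℝ) := by exact_mod_cast h3
      rw [Nat.cast_pow] at h4
      norm_num at h4 ⊢
      have hp : (1:ℝ) ≤ 2^n := one_le_pow₀ (by norm_num)
      linarith
    have h3 : 1/((n.factorial:ℝ))^2 * q^n ≤ q^n / (n.factorial:ℝ) := fact_term_le q hq n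
    have h5 : (0:ℝ) ≤ q^n / (n.factorial:ℝ) := by positivity
    have h6 : (0:ℝ) ≤ 1/((n.factorial:ℝ))^2 * q^n := by positivity
    have hcn : (0:ℝ) ≤ (n:ℝ) := Nat.cast_nonneg n
    have h0 : (0:ℝ) ≤ Real.log ((n:ℝ)+1) := Real.log_nonneg (by linarith)
    have hgg := gamma_gt
    calc (γ + Real.log ((n:ℝ)+1)) * (1/((n.factorial:ℝ))^2 * q^n)
        ≤ (2 * 2^n) * (q^n / (n.factorial:ℝ)) := by
          apply mul_le_mul (by linarith) h3 h6 (by positivity)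
      _ = 2 * ((2*q)^n / (n.factorial:ℝ)) := by
          rw [mul_pow]
          ring

lemma summable_ha (q : ℝ) (hq : 0 ≤ q) :
    Summable (fun n : ℕ => harmonicNum n * (1/((n.factorial:ℝ))^2 * q^n)) := by
  apply Summable.of_nonneg_of_le ?_ ?_ (summable_wa q hq)
  · intro n
    have h1 : (0:ℝ) ≤ 1/((n.factorial:ℝ))^2 * q^n := by positivity
    exact mul_nonneg (harmonicNum_nonneg n) h1
  · intro n
    have h1 : (0:ℝ) ≤ 1/((n.factorial:ℝ))^2 * q^n := by positivity
    exact mul_le_mul_of_nonneg_right (harmonicNum_lt n).le h1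

lemma summable_ga (q L : ℝ) (hq : 0 ≤ q) :
    Summable (fun n : ℕ => (harmonicNum n - L) * (1/((n.factorial:ℝ))^2 * q^n)) := by
  apply Summable.congr (((summable_ha q hq).sub ((summable_a q hq).mul_left L)))
  intro n
  ring

lemma tail_bound (M : ℕ) (hM : 1 ≤ M) (q L : ℝ) (hq : Real.exp (-(2*γ)) ≤ q) (hL : 0 ≤ L) :
    ∑' n : ℕ, (harmonicNum (n+M+1) - L) * (1/(((n+M+1).factorial:ℝ))^2 * q^(n+M+1))
      ≤ (∑' n : ℕ, 1/((n.factorial:ℝ))^2 * q^n)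
        * ((γ + Real.log ((M:ℝ)+1)) * q^(M+1) * Efac M) := by
  have hq0 : (0:ℝ) ≤ q := le_trans (Real.exp_pos _).le hq
  set a : ℕ → ℝ := fun n => 1/((n.factorial:ℝ))^2 * q^n with ha_def
  set D : ℝ := (γ + Real.log ((M:ℝ)+1)) * q^(M+1) * Efac M with hD_def
  set t : ℕ → ℝ := fun n => (harmonicNum (n+M+1) - L) * a (n+M+1) with ht_def
  have hsa : Summable a := summable_a q hq0
  have hsg : Summable (fun n : ℕ => (harmonicNum n - L) * a n) := summable_ga q L hq0
  have hst : Summable t := by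
    have h := (summable_nat_add_iff (f := fun n : ℕ => (harmonicNum n - L) * a n) (M+1)).2 hsg
    exact h
  have hsplit_t : ∑' n, t n = (t 0 + t 1) + ∑' n, t (n+2) := by
    rw [← Summable.sum_add_tsum_nat_add 2 hst]
    simp [Finset.sum_range_succ]
  have hsplit_a : ∑' n, a n = (a 0 + a 1) + ∑' n, a (n+2) := by
    rw [← Summable.sum_add_tsum_nat_add 2 hsa]
    simp [Finset.sum_range_succ]
  have hD0 : 0 ≤ D := by
    rw [hD_def]
    have h1 := one_le_gamma_add_log M hM
    have h2 := efac_pos M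
    positivity
  have term2 : ∀ n : ℕ, t (n+2) ≤ a (n+2) * D :=
    fun n => key_term M (n+2) hM (by omega) q L hq0 hL
  have htail2 : Summable (fun n => t (n+2)) := (summable_nat_add_iff 2).2 hst
  have hsaD : Summable (fun n => a (n+2) * D) :=
    (((summable_nat_add_iff 2).2 hsa).mul_right D)
  have tsum2 : ∑' n, t (n+2) ≤ ∑' n, a (n+2) * D := Summable.tsum_le_tsum term2 htail2 hsaD
  have t01 : t 0 + t 1 ≤ (a 0 + a 1) * D := by
    have h := key_t01 M hM q L hq hL
    have e0 : (0:ℕ)+M+1 = M+1 := by omega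
    have e1 : (1:ℕ)+M+1 = M+2 := by omega
    have ea0 : a 0 = 1 := by simp [ha_def, Nat.factorial]
    have ea1 : a 1 = q := by simp [ha_def, Nat.factorial]
    show (harmonicNum (0+M+1) - L) * a (0+M+1) + (harmonicNum (1+M+1) - L) * a (1+M+1)
      ≤ (a 0 + a 1) * D
    rw [e0, e1, ea0, ea1, hD_def]
    calc (harmonicNum (M+1) - L) * a (M+1) + (harmonicNum (M+2) - L) * a (M+2)
        ≤ (1 + q) * ((γ + Real.log ((M:ℝ)+1)) * q^(M+1) * Efac M) := h
      _ = (1 + q) * ((γ + Real.log ((M:ℝ)+1)) * q^(M+1) * Efac M) := rfl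
  have hmulD : ∑' n, a (n+2) * D = (∑' n, a (n+2)) * D := tsum_mul_right
  calc ∑' n, t n = (t 0 + t 1) + ∑' n, t (n+2) := hsplit_t
    _ ≤ (a 0 + a 1) * D + (∑' n, a (n+2)) * D := by
        rw [← hmulD]
        exact add_le_add t01 tsum2
    _ = ((a 0 + a 1) + ∑' n, a (n+2)) * D := by ring
    _ = (∑' n, a n) * D := by rw [hsplit_a]

end BesselAux


/-- **Upper bound for `K₀` for moderate `x` (Theorem B.1, part 3).** For every positive
integer `M` and every `2e^{−γ} ≤ x < 2e^{h_M − γ}`. -/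
theorem besselK0_upper_bound_moderate (M : ℕ) (hM : 1 ≤ M) (x : ℝ)
    (hx1 : 2 * Real.exp (-Real.eulerMascheroniConstant) ≤ x)
    (hx2 : x < 2 * Real.exp (harmonicNum M - Real.eulerMascheroniConstant)) :
    besselK0 x ≤ -(Real.log (x / 2) + Real.eulerMascheroniConstant)
      - ∑ n ∈ Finset.Icc 1 M, (1 / ((n.factorial : ℝ))^2) * (x^2 / 4)^n
          * (Real.log (x / 2) + Real.eulerMascheroniConstant - harmonicNum n)
      + (besselI0 x / (2 * Real.pi))
          * (Real.exp (2 * M + 2) * (Real.eulerMascheroniConstant + Real.log (M + 1)) / (M + 1))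
          * (x / (2 * (M + 1)))^(2 * M + 2) := by
  have hγ1 := BesselAux.gamma_gt
  have hγ2 := BesselAux.gamma_lt
  have hx0 : 0 < x := lt_of_lt_of_le (by positivity) hx1
  set q : ℝ := x^2/4 with hq_def
  set L : ℝ := Real.log (x / 2) + Real.eulerMascheroniConstant with hL_def
  have hq0 : (0:ℝ) ≤ q := by positivity
  have hexp2 : Real.exp (-Real.eulerMascheroniConstant) ≤ x/2 := by linarith
  have hqe : Real.exp (-(2*Real.eulerMascheroniConstant)) ≤ q := by
    have h2 : Real.exp (-Real.eulerMascheroniConstant)^2 ≤ (x/2)^2 :=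
      pow_le_pow_left₀ (Real.exp_pos _).le hexp2 2
    have h3 : Real.exp (-Real.eulerMascheroniConstant)^2
        = Real.exp (-(2*Real.eulerMascheroniConstant)) := by
      rw [← Real.exp_nat_mul]
      norm_num
    have h4 : (x/2)^2 = q := by rw [hq_def]; ring
    rw [← h4, ← h3]
    exact h2
  have hL0 : 0 ≤ L := by
    have h1 : -Real.eulerMascheroniConstant ≤ Real.log (x/2) := by
      rw [Real.le_log_iff_exp_le (by positivity)]
      exact hexp2
    rw [hL_def]
    linarith
  -- series notation
  set a : ℕ → ℝ := fun n => 1/((n.factorial:ℝ))^2 * q^n with ha_def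
  have hsa : Summable a := BesselAux.summable_a q hq0
  have hsha : Summable (fun n : ℕ => harmonicNum n * a n) := BesselAux.summable_ha q hq0
  have hsg : Summable (fun n : ℕ => (harmonicNum n - L) * a n) := BesselAux.summable_ga q L hq0
  have hsg1 : Summable (fun n : ℕ => (harmonicNum (n+1) - L) * a (n+1)) := by
    have h := (summable_nat_add_iff (f := fun n : ℕ => (harmonicNum n - L) * a n) 1).2 hsg
    exact h
  have hsh1 : Summable (fun n : ℕ => harmonicNum (n+1) * a (n+1)) := by
    have h := (summable_nat_add_iff (f := fun n : ℕ => harmonicNum n * a n) 1).2 hsha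
    exact h
  have hsa1 : Summable (fun n : ℕ => a (n+1)) := by
    have h := (summable_nat_add_iff (f := a) 1).2 hsa
    exact h
  have hI0 : besselI0 x = ∑' n, a n := by
    rw [besselI0]
  have hI0' : besselI0 x = 1 + ∑' n, a (n+1) := by
    rw [hI0, Summable.tsum_eq_zero_add hsa]
    congr 1
    simp [ha_def, Nat.factorial]
  have hPsi : besselPsi x = ∑' n, harmonicNum (n+1) * a (n+1) := by
    rw [besselPsi]
    exact tsum_congr fun n => by rw [ha_def]; ring
  have hK : besselK0 x = -L + ∑' n, (harmonicNum (n+1) - L) * a (n+1) := by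
    have e : ∑' n, (harmonicNum (n+1) - L) * a (n+1)
        = (∑' n, harmonicNum (n+1) * a (n+1)) - (∑' n, L * a (n+1)) := by
      rw [← Summable.tsum_sub hsh1 ((hsa1).mul_left L)]
      exact tsum_congr fun n => by ring
    rw [besselK0, hI0', hPsi, ← hL_def, e, tsum_mul_left]
    ring
  have hsplit : ∑' n, (harmonicNum (n+1) - L) * a (n+1)
      = (∑ i ∈ Finset.range M, (harmonicNum (i+1) - L) * a (i+1))
        + ∑' n, (harmonicNum (n+M+1) - L) * a (n+M+1) := by
    rw [← Summable.sum_add_tsum_nat_add (f := fun n : ℕ => (harmonicNum (n+1) - L) * a (n+1)) M hsg1]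
  have hIcc : ∑ n ∈ Finset.Icc 1 M, (1 / ((n.factorial : ℝ))^2) * q^n * (L - harmonicNum n)
      = - ∑ i ∈ Finset.range M, (harmonicNum (i+1) - L) * a (i+1) := by
    rw [← Finset.Ico_add_one_right_eq_Icc, Finset.sum_Ico_eq_sum_range]
    rw [show M+1-1 = M from by omega]
    rw [← Finset.sum_neg_distrib]
    apply Finset.sum_congr rfl
    intro i _
    rw [show 1+i = i+1 from by omega, ha_def]
    ring
  have htail : ∑' n, (harmonicNum (n+M+1) - L) * a (n+M+1)
      ≤ (∑' n, a n) * ((Real.eulerMascheroniConstant + Real.log ((M:ℝ)+1)) * q^(M+1) * BesselAux.Efac M) :=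
    BesselAux.tail_bound M hM q L hqe hL0
  have hT : (besselI0 x / (2 * Real.pi))
          * (Real.exp (2 * M + 2) * (Real.eulerMascheroniConstant + Real.log (M + 1)) / (M + 1))
          * (x / (2 * (M + 1)))^(2 * M + 2)
      = (∑' n, a n) * ((Real.eulerMascheroniConstant + Real.log ((M:ℝ)+1)) * q^(M+1) * BesselAux.Efac M) := by
    have hM1 : ((M:ℝ)+1) ≠ 0 := by positivity
    have hexp : Real.exp (2 * (M:ℝ) + 2) = Real.exp 1 ^ (2*M+2) := by
      rw [← Real.exp_nat_mul]
      congr 1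
      push_cast
      ring
    have hpow : (x / (2 * ((M:ℝ) + 1)))^(2*M+2) = q^(M+1) / ((M:ℝ)+1)^(2*M+2) := by
      rw [show 2*M+2 = 2*(M+1) from by ring, pow_mul]
      have e1 : (x / (2 * ((M:ℝ) + 1)))^2 = q / ((M:ℝ)+1)^2 := by
        rw [hq_def]
        field_simp
        ring
      rw [e1, div_pow, ← pow_mul]
    rw [hI0, hexp, hpow, BesselAux.Efac]
    have hpine : (2 * Real.pi) ≠ 0 := by positivity
    have hpow2 : ((M:ℝ)+1)^(2*M+3) = ((M:ℝ)+1)^(2*M+2) * ((M:ℝ)+1) := by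
      rw [← pow_succ]
    rw [hpow2]
    field_simp
  rw [hK, hsplit, hIcc, hT]
  linarith [htail]
end
end

section
/- Let P : [0,∞) → ℝ be monotone nondecreasing with 0 ≤ P(s) ≤ 1 for all s, and for τ > 0 define F(τ) = (1/τ)∫₀^∞ e^{−s/τ} P(s) ds. Then for all t > 0 and τ > 0: F(τ) − e^{−t/τ} ≤ P(t) ≤ F(τ) + 1 − e^{−t/τ}; in particular P(t) ≤ F(τ) + t/τ. -/
open MeasureTheory

private lemma exp_div_integrableOn {τ : ℝ} (hτ : 0 < τ) (a : ℝ) :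
    IntegrableOn (fun s : ℝ => Real.exp (-s / τ)) (Set.Ioi a) := by
  have h := exp_neg_integrableOn_Ioi a (show (0:ℝ) < 1/τ by positivity)
  have he : (fun x : ℝ => Real.exp (-(1/τ) * x)) = fun s : ℝ => Real.exp (-s / τ) := by
    funext x; congr 1; ring
  rwa [he] at h

private lemma exp_div_integral {τ : ℝ} (hτ : 0 < τ) (a : ℝ) :
    ∫ s in Set.Ioi a, Real.exp (-s / τ) = τ * Real.exp (-a / τ) := by
  have hderiv : ∀ x ∈ Set.Ici a,
      HasDerivAt (fun x : ℝ => -τ * Real.exp (-x / τ)) (Real.exp (-x / τ)) x := by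
    intro x _
    have h1 : HasDerivAt (fun x : ℝ => -x / τ) (-1 / τ) x :=
      (hasDerivAt_id x).neg.div_const τ
    have h2 := (h1.exp).const_mul (-τ)
    refine h2.congr_deriv ?_
    have hτ' : τ * (1 / τ) = 1 := mul_one_div_cancel hτ.ne'
    linear_combination (Real.exp (-x / τ)) * hτ'
  have htend : Filter.Tendsto (fun x : ℝ => -τ * Real.exp (-x / τ)) Filter.atTop (nhds 0) := by
    have h1 : Filter.Tendsto (fun x : ℝ => -x / τ) Filter.atTop Filter.atBot := by
      have h0 := Filter.tendsto_neg_atTop_atBot.comp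
        ((Filter.tendsto_id (α := ℝ)).atTop_div_const hτ)
      exact h0.congr fun x => by simp [neg_div]
    have h2 := Real.tendsto_exp_atBot.comp h1
    have h3 := h2.const_mul (-τ)
    simpa using h3
  have := integral_Ioi_of_hasDerivAt_of_tendsto' hderiv (exp_div_integrableOn hτ a) htend
  rw [this]; ring

/-- **Abelian means of monotone functions.** If `P : [0,∞) → [0,1]` is measurable and
monotone nondecreasing and `F(τ) = (1/τ)∫₀^∞ e^{−s/τ} P(s) ds`, then for all `t > 0` and
`τ > 0`: `F(τ) − e^{−t/τ} ≤ P(t) ≤ F(τ) + 1 − e^{−t/τ}`; in particular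
`P(t) ≤ F(τ) + t/τ`. -/
theorem abelian_mean_monotone_bounds
    (P : ℝ → ℝ) (hmeas : Measurable P) (hmono : MonotoneOn P (Set.Ici 0))
    (hbdd : ∀ s, 0 ≤ s → 0 ≤ P s ∧ P s ≤ 1)
    (F : ℝ → ℝ)
    (hF : ∀ τ, 0 < τ → F τ = (1 / τ) * ∫ s in Set.Ioi (0:ℝ), Real.exp (-s / τ) * P s)
    (t τ : ℝ) (ht : 0 < t) (hτ : 0 < τ) :
    F τ - Real.exp (-t / τ) ≤ P t ∧ P t ≤ F τ + 1 - Real.exp (-t / τ)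
      ∧ P t ≤ F τ + t / τ := by
  set E := Real.exp (-t / τ) with hE
  have hE0 : 0 < E := Real.exp_pos _
  have hE1 : E ≤ 1 := Real.exp_le_one_iff.mpr (by rw [neg_div]; exact neg_nonpos.mpr (div_pos ht hτ).le)
  have hPt := hbdd t ht.le
  -- integrability of e*P
  have hmeasEP : Measurable fun s : ℝ => Real.exp (-s / τ) * P s :=
    (Real.measurable_exp.comp (measurable_id.neg.div_const τ)).mul hmeas
  have hintP : IntegrableOn (fun s : ℝ => Real.exp (-s / τ) * P s) (Set.Ioi 0) := by
    refine (exp_div_integrableOn hτ 0).mono' hmeasEP.aestronglyMeasurable ?_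
    filter_upwards [ae_restrict_mem measurableSet_Ioi] with s hs
    have h := hbdd s (le_of_lt hs)
    rw [Real.norm_eq_abs, abs_mul, abs_of_nonneg (Real.exp_pos _).le, abs_of_nonneg h.1]
    calc Real.exp (-s / τ) * P s ≤ Real.exp (-s / τ) * 1 :=
          mul_le_mul_of_nonneg_left h.2 (Real.exp_pos _).le
      _ = Real.exp (-s / τ) := mul_one _
  have hsub1 : Set.Ioc (0:ℝ) t ⊆ Set.Ioi 0 := Set.Ioc_subset_Ioi_self
  have hsub2 : Set.Ioi t ⊆ Set.Ioi (0:ℝ) := Set.Ioi_subset_Ioi ht.le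
  set A := ∫ s in Set.Ioc (0:ℝ) t, Real.exp (-s / τ) * P s with hA
  set B := ∫ s in Set.Ioi t, Real.exp (-s / τ) * P s with hB
  have hsplit : (∫ s in Set.Ioi (0:ℝ), Real.exp (-s / τ) * P s) = A + B := by
    rw [← Set.Ioc_union_Ioi_eq_Ioi ht.le,
      setIntegral_union (Set.Ioc_disjoint_Ioi le_rfl) measurableSet_Ioi
        (hintP.mono_set hsub1) (hintP.mono_set hsub2)]
  -- value of ∫ e on Ioc 0 t
  have hIocE : (∫ s in Set.Ioc (0:ℝ) t, Real.exp (-s / τ)) = τ - τ * E := by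
    have hsplitE : (∫ s in Set.Ioi (0:ℝ), Real.exp (-s / τ))
        = (∫ s in Set.Ioc (0:ℝ) t, Real.exp (-s / τ)) + ∫ s in Set.Ioi t, Real.exp (-s / τ) := by
      rw [← Set.Ioc_union_Ioi_eq_Ioi ht.le,
        setIntegral_union (Set.Ioc_disjoint_Ioi le_rfl) measurableSet_Ioi
          ((exp_div_integrableOn hτ 0).mono_set hsub1) (exp_div_integrableOn hτ t)]
    rw [exp_div_integral hτ 0, exp_div_integral hτ t] at hsplitE
    simp only [neg_zero, zero_div, Real.exp_zero, mul_one] at hsplitE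
    rw [← hE] at hsplitE
    linarith
  -- bounds on A
  have hA1 : 0 ≤ A :=
    setIntegral_nonneg measurableSet_Ioc fun s hs =>
      mul_nonneg (Real.exp_pos _).le (hbdd s hs.1.le).1
  have hA2 : A ≤ (τ - τ * E) * P t := by
    have : A ≤ ∫ s in Set.Ioc (0:ℝ) t, Real.exp (-s / τ) * P t := by
      refine setIntegral_mono_on (hintP.mono_set hsub1)
        (((exp_div_integrableOn hτ 0).mono_set hsub1).mul_const (P t))
        measurableSet_Ioc fun s hs => ?_
      exact mul_le_mul_of_nonneg_left (hmono hs.1.le (le_of_lt ht) hs.2) (Real.exp_pos _).le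
    rwa [integral_mul_const _ _, hIocE] at this
  -- bounds on B
  have hB1 : τ * E * P t ≤ B := by
    have : (∫ s in Set.Ioi t, Real.exp (-s / τ) * P t) ≤ B := by
      refine setIntegral_mono_on ((exp_div_integrableOn hτ t).mul_const (P t))
        (hintP.mono_set hsub2) measurableSet_Ioi fun s hs => ?_
      exact mul_le_mul_of_nonneg_left (hmono (le_of_lt ht) (ht.trans hs).le (le_of_lt hs))
        (Real.exp_pos _).le
    rwa [integral_mul_const _ _, exp_div_integral hτ t, ← hE] at this
  have hB2 : B ≤ τ * E := by
    have : B ≤ ∫ s in Set.Ioi t, Real.exp (-s / τ) := by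
      refine setIntegral_mono_on (hintP.mono_set hsub2) (exp_div_integrableOn hτ t)
        measurableSet_Ioi fun s hs => ?_
      calc Real.exp (-s / τ) * P s ≤ Real.exp (-s / τ) * 1 :=
            mul_le_mul_of_nonneg_left (hbdd s (ht.trans hs).le).2 (Real.exp_pos _).le
        _ = Real.exp (-s / τ) := mul_one _
    rwa [exp_div_integral hτ t, ← hE] at this
  have hFeq : τ * F τ = A + B := by
    rw [hF τ hτ, hsplit]; field_simp
  have key : 1 - E ≤ t / τ := by
    have h := Real.add_one_le_exp (-t / τ)
    rw [← hE, neg_div] at h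
    linarith
  have goal1 : F τ - E ≤ P t := by
    nlinarith [mul_nonneg (mul_nonneg hτ.le hE0.le) hPt.1]
  have goal2 : P t ≤ F τ + 1 - E := by
    nlinarith [mul_nonneg (sub_nonneg.mpr hPt.2) (mul_nonneg hτ.le (sub_nonneg.mpr hE1))]
  exact ⟨goal1, goal2, by linarith⟩
end
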